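/- arXiv:1710.01224 — 5 statements merged into one kernel-verified Lean document; each statement's English description precedes it below -/
import Mathlib

section
/- If b, b' are distinct elements of a finite set B of integers with b ≡ b' (mod R), and (α_l)_{l∈L} are complex numbers with α_0 = 1 (0 ∈ L) satisfying (1/N) Σ_{l∈L} |α_l|² e^{2πi l(b−b')/R} = δ_{b,b'} for all b, b' ∈ B (where N = |B|), then Σ_{l∈L} |α_l|² = 0, a contradiction; hence all elements of B are pairwise incongruent modulo R. -/
open Complex

theorem Complex.exp_two_pi_I_mul_int_mul_sub_div_eq_one {R b b' : ℤ} (h : R ∣ b - b') (l : ℤ) :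
    exp (2 * Real.pi * I * ((l : ℂ) * ((b : ℂ) - (b' : ℂ)) / (R : ℂ))) = 1 := by
  obtain ⟨k, hk⟩ := h
  have hsub : (b : ℂ) - (b' : ℂ) = (R : ℂ) * (k : ℂ) := by exact_mod_cast hk
  rcases eq_or_ne R 0 with rfl | hR
  · simp
  · have hR' : (R : ℂ) ≠ 0 := by exact_mod_cast hR
    rw [hsub, ← exp_int_mul_two_pi_mul_I (l * k)]
    congr 1
    push_cast
    field_simp

theorem sum_mul_exp_two_pi_I_eq_sum_of_dvd {R b b' : ℤ} (h : R ∣ b - b') (L : Finset ℤ)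
    (w : ℤ → ℂ) :
    ∑ l ∈ L, w l * exp (2 * Real.pi * I * ((l : ℂ) * ((b : ℂ) - (b' : ℂ)) / (R : ℂ))) =
      ∑ l ∈ L, w l := by
  simp only [exp_two_pi_I_mul_int_mul_sub_div_eq_one h, mul_one]

theorem stmt0_general (R : ℤ) (B L : Finset ℤ)
    (α : ℤ → ℂ)
    (horth : ∀ b ∈ B, ∀ b' ∈ B,
      (1 / (B.card : ℂ)) * ∑ l ∈ L, (‖α l‖ : ℂ) ^ 2 *
        Complex.exp (2 * Real.pi * Complex.I * ((l : ℂ) * ((b : ℂ) - (b' : ℂ)) / (R : ℂ)))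
        = if b = b' then 1 else 0) :
    ∀ b ∈ B, ∀ b' ∈ B, b ≠ b' → ¬ (R ∣ (b - b')) := by
  intro b hb b' hb' hne hdvd
  have hdiag := horth b hb b hb
  have hoff := horth b hb b' hb'
  rw [sum_mul_exp_two_pi_I_eq_sum_of_dvd (by simp), if_pos rfl] at hdiag
  rw [sum_mul_exp_two_pi_I_eq_sum_of_dvd hdvd, if_neg hne] at hoff
  exact one_ne_zero (hdiag.symm.trans hoff)

/-- If the orthonormality condition of Assumptions 1.1 holds, then the
elements of `B` are pairwise incongruent modulo `R`. -/
theorem stmt0 (R : ℤ) (hR : 2 ≤ R) (B L : Finset ℤ) (h0L : (0 : ℤ) ∈ L)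
    (α : ℤ → ℂ) (hα0 : α 0 = 1)
    (horth : ∀ b ∈ B, ∀ b' ∈ B,
      (1 / (B.card : ℂ)) * ∑ l ∈ L, (‖α l‖ : ℂ) ^ 2 *
        Complex.exp (2 * Real.pi * Complex.I * ((l : ℂ) * ((b : ℂ) - (b' : ℂ)) / (R : ℂ)))
        = if b = b' then 1 else 0) :
    ∀ b ∈ B, ∀ b' ∈ B, b ≠ b' → ¬ (R ∣ (b - b')) :=
  stmt0_general R B L α horth
end

section
/- Let R = 4, B = {0,2}, L = {0,a,b} with a ≡ 1 (mod 4) and b ≡ 3 (mod 4). Then every nontrivial finite minimal invariant set leads to a contradiction; i.e., the only finite minimal invariant set (whose points must be integers) is {0}. Concretely: if x₀ is an integer in a min-set and x₀ ≡ 1 (mod 4), then (x₀−b)/4 is a half-odd-integer with |m_B((x₀−b)/4)| = 1, so (x₀−b)/4 would lie in the min-set but is not an integer. -/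
open Complex

/-- `m_B(x) = (1 + e^{2πi·2x})/2` for `R = 4`, `B = {0,2}`. -/
noncomputable def mB (x : ℝ) : ℂ :=
  (1 + Complex.exp (2 * Real.pi * Complex.I * (2 * x))) / 2

/-- The transition maps `g_l(t) = (t - l)/4`. -/
noncomputable def g (l : ℤ) (t : ℝ) : ℝ := (t - (l : ℝ)) / 4

/-- A set `M` is invariant for the digit set `L`: possible transitions stay in `M`. -/
def IsInvSet (L : Finset ℤ) (M : Set ℝ) : Prop :=
  ∀ t ∈ M, ∀ l ∈ L, mB (g l t) ≠ 0 → g l t ∈ M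

/-- A min-set: a nonempty finite invariant set which is minimal among such sets. -/
def IsMinSet (L : Finset ℤ) (M : Set ℝ) : Prop :=
  M.Finite ∧ M.Nonempty ∧ IsInvSet L M ∧
    ∀ M' ⊆ M, M'.Nonempty → IsInvSet L M' → M' = M

/-! Every point of a min-set lies on a cycle `t → ⋯ → t` of allowed transitions, so
`4^(n+1) t = t - c` with `c ∈ ℤ`: its denominator is odd. A non-integer `t` would admit both
transitions `t ↦ t/4` and `t ↦ (t - a)/4`, and then `a/4`, their difference, would have an odd
denominator too. An integer `t` cannot be odd, since then both `(t - a)/4` and `(t - b)/4` would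
be integers although `a ≢ b (mod 4)`; so `t/4` is again a point of the set, and iterating gives
`4^n ∣ t` for all `n`, i.e. `t = 0`. -/

lemma four_mul_eq_odd_of_mB_eq_zero {x : ℝ} (h : mB x = 0) : ∃ k : ℤ, 4 * x = 2 * k + 1 := by
  have hexp : Complex.exp (2 * Real.pi * I * (2 * x)) = -1 := by
    unfold mB at h
    linear_combination 2 * h
  obtain ⟨n, hn⟩ := Complex.exp_eq_one_iff.mp <|
    show Complex.exp (2 * Real.pi * I * (2 * x) - Real.pi * I) = 1 by
      rw [Complex.exp_sub, hexp, Complex.exp_pi_mul_I]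
      norm_num
  refine ⟨n, ?_⟩
  have hπI : (Real.pi : ℂ) * I ≠ 0 := mul_ne_zero (by exact_mod_cast Real.pi_ne_zero) I_ne_zero
  have h4x : ((4 * x : ℝ) : ℂ) = ((2 * n + 1 : ℝ) : ℂ) := by
    apply mul_right_cancel₀ hπI
    push_cast
    linear_combination hn
  exact_mod_cast h4x

lemma mB_odd_div_two (k : ℤ) : mB ((2 * k + 1) / 2) = 1 := by
  have hexp : 2 * Real.pi * I * (2 * (((2 * k + 1) / 2 : ℝ) : ℂ)) =
      (2 * k + 1 : ℤ) * (2 * Real.pi * I) := by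
    push_cast
    ring
  rw [mB, hexp, Complex.exp_int_mul_two_pi_mul_I]
  norm_num

lemma mB_g_ne_zero {l : ℤ} {t : ℝ} (h : ∀ k : ℤ, t - l ≠ 2 * k + 1) :
    mB (g l t) ≠ 0 := by
  intro h0
  obtain ⟨k, hk⟩ := four_mul_eq_odd_of_mB_eq_zero h0
  exact h k (by unfold g at hk; linarith)

lemma mB_g_intCast_ne_zero {l t : ℤ} (h : Even (t - l)) : mB (g l t) ≠ 0 :=
  mB_g_ne_zero fun k hk => by
    have hodd : t - l = 2 * k + 1 := by exact_mod_cast hk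
    exact Int.not_even_two_mul_add_one k (hodd ▸ h)

lemma g_intCast_eq_intCast_iff {l t z : ℤ} : g l t = z ↔ t = l + 4 * z := by
  unfold g
  rw [div_eq_iff four_ne_zero, ← Int.cast_inj (α := ℝ)]
  push_cast
  constructor <;> intro h <;> linarith

def Transition (L : Finset ℤ) (t s : ℝ) : Prop := ∃ l ∈ L, mB (g l t) ≠ 0 ∧ s = g l t

section Transitions

variable {L : Finset ℤ} {M : Set ℝ}

open Relation

lemma IsMinSet.isInvSet (hM : IsMinSet L M) : IsInvSet L M := hM.2.2.1

lemma IsInvSet.mem_of_transGen (hM : IsInvSet L M) {t s : ℝ} (ht : t ∈ M)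
    (h : TransGen (Transition L) t s) : s ∈ M := by
  induction h with
  | single h => obtain ⟨l, hl, hne, rfl⟩ := h; exact hM t ht l hl hne
  | tail _ h ih => obtain ⟨l, hl, hne, rfl⟩ := h; exact hM _ ih l hl hne

lemma isInvSet_setOf_transGen (t : ℝ) : IsInvSet L {s | TransGen (Transition L) t s} :=
  fun _ hs l hl hne => hs.tail ⟨l, hl, hne, rfl⟩

lemma IsMinSet.transGen_self (hM : IsMinSet L M) {t : ℝ} (ht : t ∈ M)
    (hstep : ∃ s, Transition L t s) : TransGen (Transition L) t t := by
  obtain ⟨-, -, hinv, hmin⟩ := hM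
  obtain ⟨s, hs⟩ := hstep
  have hreach : {s | TransGen (Transition L) t s} = M :=
    hmin _ (fun _ hs => hinv.mem_of_transGen ht hs) ⟨s, .single hs⟩ (isInvSet_setOf_transGen t)
  rw [← hreach] at ht
  exact ht

lemma exists_four_pow_mul_eq_sub_of_transGen {x y : ℝ} (h : TransGen (Transition L) x y) :
    ∃ n : ℕ, ∃ c : ℤ, (4 : ℝ) ^ (n + 1) * y = x - c := by
  induction h with
  | single h =>
    obtain ⟨l, -, -, rfl⟩ := h
    exact ⟨0, l, by unfold g; ring⟩
  | tail _ h ih =>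
    obtain ⟨l, -, -, rfl⟩ := h
    obtain ⟨n, c, hc⟩ := ih
    refine ⟨n + 1, c + 4 ^ (n + 1) * l, ?_⟩
    unfold g
    push_cast
    linear_combination hc

end Transitions

def OddDenom (x : ℝ) : Prop := ∃ d : ℤ, Odd d ∧ ∃ z : ℤ, d * x = z

lemma OddDenom.sub {x y : ℝ} (hx : OddDenom x) (hy : OddDenom y) : OddDenom (x - y) := by
  obtain ⟨d, hd, z, hz⟩ := hx
  obtain ⟨d', hd', z', hz'⟩ := hy
  refine ⟨d * d', hd.mul hd', d' * z - d * z', ?_⟩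
  push_cast
  linear_combination (d' : ℝ) * hz - (d : ℝ) * hz'

lemma not_oddDenom_div_four {a : ℤ} (ha : Odd a) : ¬OddDenom (a / 4) := by
  rintro ⟨d, hd, z, hz⟩
  have hda : d * a = 4 * z := by
    have hreal : (d : ℝ) * a = 4 * z := by linear_combination 4 * hz
    exact_mod_cast hreal
  exact Int.not_even_iff_odd.mpr (hd.mul ha) ⟨2 * z, by omega⟩

lemma oddDenom_of_transGen_self {L : Finset ℤ} {x : ℝ}
    (h : Relation.TransGen (Transition L) x x) : OddDenom x := by
  obtain ⟨n, c, hc⟩ := exists_four_pow_mul_eq_sub_of_transGen h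
  have hodd : Odd ((4 : ℤ) ^ (n + 1) - 1) :=
    (Int.even_pow.mpr ⟨by decide, n.succ_ne_zero⟩).sub_odd odd_one
  exact ⟨_, hodd, -c, by push_cast; linear_combination hc⟩

section MinSet

variable {a b : ℤ} {M : Set ℝ}

lemma exists_transition (ha : Odd a) (t : ℝ) : ∃ s, Transition {0, a, b} t s := by
  by_cases h : ∀ k : ℤ, t - ((0 : ℤ) : ℝ) ≠ 2 * k + 1
  · exact ⟨_, 0, by simp, mB_g_ne_zero h, rfl⟩
  push Not at h
  obtain ⟨k, hk⟩ := h
  refine ⟨_, a, by simp, mB_g_ne_zero fun k' hk' => ?_, rfl⟩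
  have ha_even : a = 2 * (k - k') := by
    have hreal : (a : ℝ) = 2 * (k - k') := by push_cast at hk ⊢; linarith
    exact_mod_cast hreal
  exact Int.not_even_iff_odd.mpr ha ⟨k - k', by omega⟩

lemma IsMinSet.oddDenom (hM : IsMinSet {0, a, b} M) (ha : Odd a) {t : ℝ} (ht : t ∈ M) :
    OddDenom t :=
  oddDenom_of_transGen_self (hM.transGen_self ht (exists_transition ha t))

lemma IsMinSet.exists_eq_intCast (hM : IsMinSet {0, a, b} M) (ha : Odd a) {t : ℝ}
    (ht : t ∈ M) : ∃ z : ℤ, t = z := by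
  by_contra hnot
  push Not at hnot
  have hallowed (l : ℤ) : mB (g l t) ≠ 0 :=
    mB_g_ne_zero fun k hk => hnot (l + 2 * k + 1) (by push_cast; linarith)
  have h0 := hM.isInvSet t ht 0 (by simp) (hallowed 0)
  have ha' := hM.isInvSet t ht a (by simp) (hallowed a)
  apply not_oddDenom_div_four ha
  convert (hM.oddDenom ha h0).sub (hM.oddDenom ha ha') using 1
  unfold g
  push_cast
  ring

lemma IsMinSet.exists_four_mul (hM : IsMinSet {0, a, b} M) (ha : Odd a) (hb : Odd b)
    (hab : ¬a ≡ b [ZMOD 4]) {t : ℤ} (ht : (t : ℝ) ∈ M) :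
    ∃ z : ℤ, t = 4 * z ∧ (z : ℝ) ∈ M := by
  have hstep (l : ℤ) (hl : l ∈ ({0, a, b} : Finset ℤ)) (he : Even (t - l)) :
      ∃ z : ℤ, t = l + 4 * z ∧ (z : ℝ) ∈ M := by
    have hmem := hM.isInvSet t ht l hl (mB_g_intCast_ne_zero he)
    obtain ⟨z, hz⟩ := hM.exists_eq_intCast ha hmem
    exact ⟨z, g_intCast_eq_intCast_iff.mp hz, hz ▸ hmem⟩
  rcases Int.even_or_odd t with ht_even | ht_odd
  · simpa using hstep 0 (by simp) (by simpa using ht_even)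
  obtain ⟨za, hza, -⟩ := hstep a (by simp) (ht_odd.sub_odd ha)
  obtain ⟨zb, hzb, -⟩ := hstep b (by simp) (ht_odd.sub_odd hb)
  exact absurd (by unfold Int.ModEq; omega) hab

lemma IsMinSet.four_pow_dvd (hM : IsMinSet {0, a, b} M) (ha : Odd a) (hb : Odd b)
    (hab : ¬a ≡ b [ZMOD 4]) (n : ℕ) {t : ℤ} (ht : (t : ℝ) ∈ M) : 4 ^ n ∣ t := by
  induction n generalizing t with
  | zero => exact one_dvd t
  | succ n ih =>
    obtain ⟨z, rfl, hz⟩ := hM.exists_four_mul ha hb hab ht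
    rw [pow_succ']
    exact mul_dvd_mul_left 4 (ih hz)

lemma IsMinSet.eq_zero (hM : IsMinSet {0, a, b} M) (ha : Odd a) (hb : Odd b)
    (hab : ¬a ≡ b [ZMOD 4]) {x : ℝ} (hx : x ∈ M) : x = 0 := by
  obtain ⟨t, rfl⟩ := hM.exists_eq_intCast ha hx
  have ht : t = 0 := by
    by_contra ht
    obtain ⟨n, hn⟩ := (Int.finiteMultiplicity_iff (a := 4)).mpr ⟨by decide, ht⟩
    exact hn (hM.four_pow_dvd ha hb hab (n + 1) hx)
  simp [ht]

end MinSet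

/-- for `L = {0,a,b}` with `a ≡ 1 (mod 4)`, `b ≡ 3 (mod 4)`, the only min-set
is `{0}`; concretely, if `x₀ ≡ 1 (mod 4)` is an integer then `(x₀ - b)/4` is a
half-odd-integer with `|m_B((x₀ - b)/4)| = 1`. -/
theorem stmt4 (a b : ℤ) (ha : a % 4 = 1) (hb : b % 4 = 3) :
    (∀ M : Set ℝ, IsMinSet ({0, a, b} : Finset ℤ) M → M = {0}) ∧
    (∀ x₀ : ℤ, x₀ % 4 = 1 →
      (∃ k : ℤ, ((x₀ : ℝ) - (b : ℝ)) / 4 = (2 * (k : ℝ) + 1) / 2) ∧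
      ‖mB (((x₀ : ℝ) - (b : ℝ)) / 4)‖ = 1) := by
  have ha_odd : Odd a := Int.odd_iff.mpr (by omega)
  have hb_odd : Odd b := Int.odd_iff.mpr (by omega)
  have hab : ¬a ≡ b [ZMOD 4] := by unfold Int.ModEq; omega
  refine ⟨fun M hM => ?_, fun x₀ hx₀ => ?_⟩
  · exact Set.eq_singleton_iff_nonempty_unique_mem.mpr
      ⟨hM.2.1, fun x hx => hM.eq_zero ha_odd hb_odd hab hx⟩
  · obtain ⟨k, hk⟩ : ∃ k : ℤ, x₀ - b = 4 * k + 2 := ⟨(x₀ - b - 2) / 4, by omega⟩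
    have hhalf : ((x₀ : ℝ) - b) / 4 = (2 * k + 1) / 2 := by
      rw [show (x₀ : ℝ) - b = 4 * k + 2 by exact_mod_cast hk]
      ring
    exact ⟨⟨k, hhalf⟩, by rw [hhalf, mB_odd_div_two, norm_one]⟩
end

section
/- Let R = 4, B = {0,2}, L = {0,a,b} with a ≡ b ≡ a₀ (mod 4), a₀ ∈ {1,3}. If x₀ is an integer with |m_B(x₀)| = 1 (i.e., x₀ ∈ ℤ) belonging to a nontrivial min-set, then: (i) x₀ ≡ 0 (mod 4) or x₀ ≡ a₀ (mod 4); (ii) if x₀ ≡ 0 (mod 4) then m_B(x₀/4) ≠ 0 while m_B((x₀−a)/4) = m_B((x₀−b)/4) = 0; (iii) if x₀ ≡ a₀ (mod 4) then m_B((x₀−a)/4) ≠ 0 and m_B((x₀−b)/4) ≠ 0 while m_B(x₀/4) = 0. -/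
/-!
`m_B(t)` vanishes exactly when `4t` is an odd integer. If an integer point `x` of a finite
invariant set had `x - l ≡ 2 (mod 4)` for a digit `l`, then `g_l(x) = (2k+1)/2` would be a
transition that must stay in the set, and from there the digit `0` would force the whole orbit
`(2k+1)/(2·4ⁿ)` into it, since four times such a point is never an odd integer: the set would be
infinite. Excluding this for `l = 0` and `l = a` leaves `x ≡ 0` or `x ≡ a₀ (mod 4)`; the
remaining claims are the parity of `x - l`.
-/

open Complex

lemma mB_eq_zero_iff (x : ℝ) : mB x = 0 ↔ ∃ m : ℤ, 4 * x = 2 * m + 1 := by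
  have hπI : (Real.pi : ℂ) * I ≠ 0 := mul_ne_zero (by exact_mod_cast Real.pi_ne_zero) I_ne_zero
  have hexp : mB x = 0 ↔ exp (2 * Real.pi * I * (2 * x)) = exp (Real.pi * I) := by
    rw [exp_pi_mul_I, mB, div_eq_zero_iff, or_iff_left two_ne_zero, add_eq_zero_iff_neg_eq,
      eq_comm]
  rw [hexp, exp_eq_exp_iff_exists_int]
  refine exists_congr fun m => ⟨fun h => ?_, fun h => ?_⟩
  · have h' : (Real.pi * I) * (4 * x) = (Real.pi * I) * (2 * m + 1) := by linear_combination h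
    exact_mod_cast mul_left_cancel₀ hπI h'
  · have h' : ((4 * x : ℝ) : ℂ) = 2 * m + 1 := by exact_mod_cast h
    push_cast at h'
    linear_combination (Real.pi * I) * h'

lemma mB_intCast_div_four_eq_zero_iff (n : ℤ) : mB (n / 4) = 0 ↔ Odd n := by
  rw [mB_eq_zero_iff, mul_div_cancel₀ _ four_ne_zero]
  exact exists_congr fun m => by norm_cast

lemma mB_odd_div_two_div_four_pow_ne_zero (k : ℤ) (n : ℕ) :
    mB ((2 * k + 1 : ℤ) / 2 / 4 ^ n) ≠ 0 := by
  rw [Ne, mB_eq_zero_iff]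
  rintro ⟨m, hm⟩
  cases n with
  | zero =>
    rw [pow_zero, div_one] at hm
    have hreal : ((2 * (2 * k + 1) : ℤ) : ℝ) = (2 * m + 1 : ℤ) := by
      push_cast at hm ⊢; linear_combination hm
    have hint := Int.cast_injective hreal
    omega
  | succ j =>
    have hreal : ((2 * k + 1 : ℤ) : ℝ) = 2 * ((2 * m + 1) * 4 ^ j) := by
      field_simp at hm
      linear_combination hm / 4
    have hint : (2 * k + 1 : ℤ) = 2 * ((2 * m + 1) * 4 ^ j) := by exact_mod_cast hreal
    omega

namespace IsInvSet

variable {L : Finset ℤ} {M : Set ℝ}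

lemma div_four_pow_mem (hM : IsInvSet L M) (h0 : (0 : ℤ) ∈ L) {t : ℝ} (ht : t ∈ M)
    (hne : ∀ n : ℕ, mB (t / 4 ^ (n + 1)) ≠ 0) (n : ℕ) : t / 4 ^ n ∈ M := by
  induction n with
  | zero => simpa using ht
  | succ n ih =>
    have hg : g 0 (t / 4 ^ n) = t / 4 ^ (n + 1) := by
      rw [g, Int.cast_zero, sub_zero, div_div, pow_succ]
    exact hg ▸ hM _ ih 0 h0 (hg ▸ hne n)

lemma odd_div_two_notMem (hM : IsInvSet L M) (hfin : M.Finite) (h0 : (0 : ℤ) ∈ L) (k : ℤ) :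
    ((2 * k + 1 : ℤ) : ℝ) / 2 ∉ M := by
  intro hk
  have hne : ((2 * k + 1 : ℤ) : ℝ) / 2 ≠ 0 := by
    have : ((2 * k + 1 : ℤ) : ℝ) ≠ 0 := by exact_mod_cast (by omega : 2 * k + 1 ≠ 0)
    positivity
  refine hfin.not_infinite (Set.infinite_of_injective_forall_mem ?_
    (hM.div_four_pow_mem h0 hk fun n => mB_odd_div_two_div_four_pow_ne_zero k (n + 1)))
  intro i j hij
  have h4 : (4 : ℝ) ^ i = 4 ^ j :=
    inv_inj.mp (mul_left_cancel₀ hne (by simpa only [div_eq_mul_inv] using hij))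
  exact Nat.pow_right_injective (by norm_num : 2 ≤ 4) (by exact_mod_cast h4)

lemma sub_emod_four_ne_two (hM : IsInvSet L M) (hfin : M.Finite) (h0 : (0 : ℤ) ∈ L)
    {x l : ℤ} (hx : (x : ℝ) ∈ M) (hl : l ∈ L) : (x - l) % 4 ≠ 2 := by
  intro h2
  obtain ⟨k, hk⟩ : ∃ k, x - l = 2 * (2 * k + 1) := ⟨(x - l) / 4, by omega⟩
  have hg : g l x = ((x - l : ℤ) : ℝ) / 4 := by rw [g, Int.cast_sub]
  have hmB : mB (g l x) ≠ 0 := by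
    rw [hg, Ne, mB_intCast_div_four_eq_zero_iff, Int.not_odd_iff_even]
    exact ⟨2 * k + 1, by omega⟩
  have hhalf : g l x = ((2 * k + 1 : ℤ) : ℝ) / 2 := by
    rw [hg, hk]; push_cast; ring
  exact hM.odd_div_two_notMem hfin h0 k (hhalf ▸ hM _ hx l hl hmB)

end IsInvSet

theorem stmt5_general (a b a₀ : ℤ) (ha₀ : a₀ = 1 ∨ a₀ = 3) (ha : a % 4 = a₀) (hb : b % 4 = a₀)
    (M : Set ℝ) (hM : IsMinSet ({0, a, b} : Finset ℤ) M)
    (x₀ : ℤ) (hx : (x₀ : ℝ) ∈ M) :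
    (x₀ % 4 = 0 ∨ x₀ % 4 = a₀) ∧
    (x₀ % 4 = 0 → mB ((x₀ : ℝ) / 4) ≠ 0 ∧
      mB (((x₀ : ℝ) - (a : ℝ)) / 4) = 0 ∧ mB (((x₀ : ℝ) - (b : ℝ)) / 4) = 0) ∧
    (x₀ % 4 = a₀ → mB (((x₀ : ℝ) - (a : ℝ)) / 4) ≠ 0 ∧
      mB (((x₀ : ℝ) - (b : ℝ)) / 4) ≠ 0 ∧ mB ((x₀ : ℝ) / 4) = 0) := by
  obtain ⟨hfin, -, hinv, -⟩ := hM
  have h0 : (0 : ℤ) ∈ ({0, a, b} : Finset ℤ) := by simp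
  have hx0 := hinv.sub_emod_four_ne_two hfin h0 hx h0
  have hxa := hinv.sub_emod_four_ne_two hfin h0 hx (by simp : a ∈ ({0, a, b} : Finset ℤ))
  simp only [← Int.cast_sub, ne_eq, mB_intCast_div_four_eq_zero_iff, Int.odd_iff]
  rcases ha₀ with rfl | rfl <;> omega

/-- residues and possible/impossible transitions for integer points of a
nontrivial min-set when `a ≡ b ≡ a₀ (mod 4)`, `a₀ ∈ {1,3}`. -/
theorem stmt5 (a b a₀ : ℤ) (ha₀ : a₀ = 1 ∨ a₀ = 3) (ha : a % 4 = a₀) (hb : b % 4 = a₀)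
    (M : Set ℝ) (hM : IsMinSet ({0, a, b} : Finset ℤ) M) (hMnt : M ≠ {0})
    (x₀ : ℤ) (hx : (x₀ : ℝ) ∈ M) :
    (x₀ % 4 = 0 ∨ x₀ % 4 = a₀) ∧
    (x₀ % 4 = 0 → mB ((x₀ : ℝ) / 4) ≠ 0 ∧
      mB (((x₀ : ℝ) - (a : ℝ)) / 4) = 0 ∧ mB (((x₀ : ℝ) - (b : ℝ)) / 4) = 0) ∧
    (x₀ % 4 = a₀ → mB (((x₀ : ℝ) - (a : ℝ)) / 4) ≠ 0 ∧
      mB (((x₀ : ℝ) - (b : ℝ)) / 4) ≠ 0 ∧ mB ((x₀ : ℝ) / 4) = 0) :=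
  stmt5_general a b a₀ ha₀ ha hb M hM x₀ hx
end

section
/- For R = 4, B = {0,2}, the digit set {0,3} has a unique extreme cycle, namely {−1}: that is, the only finite sets of integers t with |m_B(t)| = 1 that are cyclically permuted by the maps t ↦ t/4 and t ↦ (t−3)/4 (staying in ℤ with |m_B| = 1 along the cycle) are contained in {−1} ∪ {0}, and the nontrivial one is {−1}. -/
open Complex

/-! Every integer other than `0` and `-1` strictly decreases in absolute value under
`t ↦ (t - l)/4` with `0 ≤ l ≤ 3`, so an invariant set of integers contains one of these two
fixed points (of `t ↦ t/4` and `t ↦ (t - 3)/4` respectively), and minimality forces the set to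
be that singleton. -/

section ExtremeCycle

variable {C : Set ℝ} {L : Finset ℤ}

lemma natAbs_lt_of_sub_eq_four_mul {k l m : ℤ} (hl : 0 ≤ l ∧ l ≤ 3) (hk₀ : k ≠ 0)
    (hk₁ : k ≠ -1) (h : k - l = 4 * m) : m.natAbs < k.natAbs := by
  omega

theorem neg_one_mem_or_zero_mem (hL : ∀ l ∈ L, 0 ≤ l ∧ l ≤ 3)
    (hint : ∀ t ∈ C, ∃ k : ℤ, t = (k : ℝ))
    (hclosed : ∀ t ∈ C, ∃ l ∈ L, (t - (l : ℝ)) / 4 ∈ C) (k : ℤ) (hk : (k : ℝ) ∈ C) :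
    (-1 : ℝ) ∈ C ∨ (0 : ℝ) ∈ C := by
  by_cases hk₀ : k = 0
  · exact .inr (by simpa [hk₀] using hk)
  by_cases hk₁ : k = -1
  · exact .inl (by simpa [hk₁] using hk)
  obtain ⟨l, hl, hlC⟩ := hclosed _ hk
  obtain ⟨m, hm⟩ := hint _ hlC
  have hdiv : k - l = 4 * m := by
    have : (k : ℝ) - l = 4 * m := by linarith [div_eq_iff (four_ne_zero' ℝ) |>.mp hm]
    exact_mod_cast this
  have := natAbs_lt_of_sub_eq_four_mul (hL l hl) hk₀ hk₁ hdiv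
  exact neg_one_mem_or_zero_mem hL hint hclosed m (hm ▸ hlC)
termination_by k.natAbs

lemma eq_singleton_of_fixed
    (hmin : ∀ C' ⊆ C, C'.Nonempty →
      (∀ t ∈ C', ∃ l ∈ L, (t - (l : ℝ)) / 4 ∈ C') → C' = C)
    {x : ℝ} (hx : x ∈ C) {l : ℤ} (hl : l ∈ L) (hfix : (x - l) / 4 = x) : C = {x} := by
  refine (hmin {x} (Set.singleton_subset_iff.mpr hx) (Set.singleton_nonempty x) ?_).symm
  rintro t rfl
  exact ⟨l, hl, hfix⟩

end ExtremeCycle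

theorem stmt8_general (C : Set ℝ) (hne : C.Nonempty)
    (hint : ∀ t ∈ C, ∃ k : ℤ, t = (k : ℝ))
    (hclosed : ∀ t ∈ C, ∃ l ∈ ({0, 3} : Finset ℤ), (t - (l : ℝ)) / 4 ∈ C)
    (hmin : ∀ C' ⊆ C, C'.Nonempty →
      (∀ t ∈ C', ∃ l ∈ ({0, 3} : Finset ℤ), (t - (l : ℝ)) / 4 ∈ C') → C' = C) :
    C ⊆ ({-1, 0} : Set ℝ) ∧ (C ≠ {0} → C = {-1}) := by
  obtain ⟨t, ht⟩ := hne
  obtain ⟨k, rfl⟩ := hint t ht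
  have hL : ∀ l ∈ ({0, 3} : Finset ℤ), 0 ≤ l ∧ l ≤ 3 := by decide
  have hC : C = {-1} ∨ C = {0} :=
    (neg_one_mem_or_zero_mem hL hint hclosed k ht).imp
      (fun h => eq_singleton_of_fixed hmin h (l := 3) (by simp) (by norm_num))
      (fun h => eq_singleton_of_fixed hmin h (l := 0) (by simp) (by norm_num))
  rcases hC with rfl | rfl <;> simp

/-- the only extreme cycles for the digit set `{0,3}` (finite nonempty sets of
integers with `|m_B| = 1`, cyclically permuted by `t ↦ t/4` and `t ↦ (t-3)/4`) are
contained in `{-1} ∪ {0}`, and the nontrivial one is `{-1}`. -/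
theorem stmt8 (C : Set ℝ) (hfin : C.Finite) (hne : C.Nonempty)
    (hint : ∀ t ∈ C, ∃ k : ℤ, t = (k : ℝ))
    (hext : ∀ t ∈ C, ‖mB t‖ = 1)
    (hclosed : ∀ t ∈ C, ∃ l ∈ ({0, 3} : Finset ℤ), (t - (l : ℝ)) / 4 ∈ C)
    (hmin : ∀ C' ⊆ C, C'.Nonempty →
      (∀ t ∈ C', ∃ l ∈ ({0, 3} : Finset ℤ), (t - (l : ℝ)) / 4 ∈ C') → C' = C) :
    C ⊆ ({-1, 0} : Set ℝ) ∧ (C ≠ {0} → C = {-1}) :=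
  stmt8_general C hne hint hclosed hmin
end

section
/- Let R = 4, B = {0,2}, and L = {0, 3, 4^{n+1} − 1} for some n ∈ ℕ. Then the set M = {−1, −4, −4², …, −4ⁿ} is a nontrivial finite minimal invariant set: g_{4^{n+1}−1}(−1) = −4ⁿ, g_3(−1) = −1, g_0(−4^k) = −4^{k−1} for 1 ≤ k ≤ n, and |m_B(x)| = 1 for all x ∈ M, and transitions between any two points of M are possible. -/
open Complex

/-!
Proof idea: `m_B(x) = (1 + e^{4πix})/2` equals `1` at integers and vanishes on `(2ℤ + 1)/4`.
Hence from `-4^k` with `k ≥ 1` only the digit `0` is an admissible transition (the odd digits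
give an odd numerator), leading to `-4^(k-1)`, while from `-1` only the odd digits are
admissible, leading to `-1` and `-4^n`. So the points of `M` form one cycle
`-1 → -4^n → ⋯ → -4 → -1`, and any nonempty invariant subset of `M` runs through all of it.
-/

lemma mB_intCast (m : ℤ) : mB m = 1 := by
  have hexp : 2 * (Real.pi : ℂ) * I * (2 * ((m : ℝ) : ℂ)) = (2 * m : ℤ) * (2 * Real.pi * I) := by
    push_cast; ring
  rw [mB, hexp, exp_int_mul_two_pi_mul_I]
  norm_num

lemma mB_g_intCast_eq_zero {t l : ℤ} (h : Odd (t - l)) : mB (g l t) = 0 := by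
  obtain ⟨j, hj⟩ := h
  have hexp : 2 * (Real.pi : ℂ) * I * (2 * ((g l t : ℝ) : ℂ))
      = j * (2 * Real.pi * I) + Real.pi * I := by
    have hj' : (t : ℂ) - l = 2 * j + 1 := by exact_mod_cast hj
    simp only [g, ofReal_div, ofReal_sub, ofReal_intCast, ofReal_ofNat]
    linear_combination Real.pi * I * hj'
  rw [mB, hexp, exp_add, exp_int_mul_two_pi_mul_I, exp_pi_mul_I]
  norm_num

lemma mB_neg_four_pow (k : ℕ) : mB (-(4 : ℝ) ^ k) = 1 := by
  exact_mod_cast mB_intCast (-4 ^ k)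

lemma mB_g_neg_four_pow_eq_zero {k : ℕ} {l : ℤ} (h : Odd (-4 ^ k - l)) :
    mB (g l (-(4 : ℝ) ^ k)) = 0 := by
  exact_mod_cast mB_g_intCast_eq_zero h

lemma odd_neg_four_pow_succ_sub (k : ℕ) {l : ℤ} (hl : Odd l) : Odd (-4 ^ (k + 1) - l) :=
  (Int.even_pow.2 ⟨by decide, k.succ_ne_zero⟩).neg.sub_odd hl

lemma g_zero_neg_four_pow_succ (k : ℕ) : g 0 (-(4 : ℝ) ^ (k + 1)) = -(4 : ℝ) ^ k := by
  rw [g]; push_cast; ring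

lemma g_three_neg_one : g 3 (-1) = -1 := by
  rw [g]; norm_num

lemma g_four_pow_succ_sub_one_neg_one (n : ℕ) : g (4 ^ (n + 1) - 1) (-1) = -(4 : ℝ) ^ n := by
  rw [g]; push_cast; ring

def negFourPows (n : ℕ) : Set ℝ := {x | ∃ k ≤ n, x = -(4 : ℝ) ^ k}

lemma negFourPows_finite (n : ℕ) : (negFourPows n).Finite := by
  convert (Set.finite_Iic n).image (fun k : ℕ => -(4 : ℝ) ^ k) using 1
  ext x
  simp [negFourPows, eq_comm]

lemma negFourPows_isInvSet (n : ℕ) : IsInvSet {0, 3, 4 ^ (n + 1) - 1} (negFourPows n) := by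
  rintro t ⟨k, hk, rfl⟩ l hl hne
  simp only [Finset.mem_insert, Finset.mem_singleton] at hl
  rcases k with _ | k
  · rcases hl with rfl | rfl | rfl
    · exact absurd (mB_g_neg_four_pow_eq_zero (by decide)) hne
    · exact ⟨0, n.zero_le, by rw [pow_zero, g_three_neg_one]⟩
    · exact ⟨n, le_rfl, by rw [pow_zero, g_four_pow_succ_sub_one_neg_one]⟩
  · rcases hl with rfl | rfl | rfl
    · exact ⟨k, by omega, g_zero_neg_four_pow_succ k⟩
    · exact absurd (mB_g_neg_four_pow_eq_zero (odd_neg_four_pow_succ_sub k (by decide))) hne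
    · refine absurd (mB_g_neg_four_pow_eq_zero (odd_neg_four_pow_succ_sub k ?_)) hne
      exact (Int.even_pow.2 ⟨by decide, n.succ_ne_zero⟩).sub_odd odd_one

lemma IsInvSet.neg_four_pow_mem_of_le {L : Finset ℤ} {M : Set ℝ} (hM : IsInvSet L M)
    (hL : 0 ∈ L) {j k : ℕ} (hjk : j ≤ k) (hk : -(4 : ℝ) ^ k ∈ M) : -(4 : ℝ) ^ j ∈ M := by
  induction k, hjk using Nat.le_induction with
  | base => exact hk
  | succ k _ ih =>
    have h := hM _ hk 0 hL
    rw [g_zero_neg_four_pow_succ, mB_neg_four_pow] at h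
    exact ih (h one_ne_zero)

lemma negFourPows_isMinSet (n : ℕ) : IsMinSet {0, 3, 4 ^ (n + 1) - 1} (negFourPows n) := by
  refine ⟨negFourPows_finite n, ⟨-(4 : ℝ) ^ 0, 0, n.zero_le, rfl⟩, negFourPows_isInvSet n, ?_⟩
  rintro M' hM' ⟨x, hx⟩ hinv
  have hL0 : (0 : ℤ) ∈ ({0, 3, 4 ^ (n + 1) - 1} : Finset ℤ) := by simp
  obtain ⟨k, -, rfl⟩ := hM' hx
  have h_one : -(4 : ℝ) ^ 0 ∈ M' := hinv.neg_four_pow_mem_of_le hL0 k.zero_le hx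
  have h_top : -(4 : ℝ) ^ n ∈ M' := by
    have h := hinv _ h_one (4 ^ (n + 1) - 1) (by simp)
    rw [pow_zero, g_four_pow_succ_sub_one_neg_one, mB_neg_four_pow] at h
    exact h one_ne_zero
  refine hM'.antisymm ?_
  rintro _ ⟨j, hj, rfl⟩
  exact hinv.neg_four_pow_mem_of_le hL0 hj h_top

/-- for `L = {0, 3, 4^{n+1} - 1}`, the set `M = {-1, -4, …, -4^n}` is a
nontrivial min-set, with the indicated transitions, and `|m_B| = 1` on `M`. -/
theorem stmt9 (n : ℕ) :
    g (4 ^ (n + 1) - 1) (-1) = -(4 : ℝ) ^ n ∧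
    g 3 (-1) = -1 ∧
    (∀ k : ℕ, 1 ≤ k → k ≤ n → g 0 (-(4 : ℝ) ^ k) = -(4 : ℝ) ^ (k - 1)) ∧
    (∀ x ∈ {x : ℝ | ∃ k ≤ n, x = -(4 : ℝ) ^ k}, ‖mB x‖ = 1) ∧
    IsMinSet ({0, 3, 4 ^ (n + 1) - 1} : Finset ℤ) {x : ℝ | ∃ k ≤ n, x = -(4 : ℝ) ^ k} ∧
    {x : ℝ | ∃ k ≤ n, x = -(4 : ℝ) ^ k} ≠ ({0} : Set ℝ) := by
  refine ⟨g_four_pow_succ_sub_one_neg_one n, g_three_neg_one, ?_, ?_,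
    negFourPows_isMinSet n, ?_⟩
  · intro k hk _
    obtain ⟨k, rfl⟩ := Nat.exists_eq_add_of_le' hk
    exact g_zero_neg_four_pow_succ k
  · rintro _ ⟨k, -, rfl⟩
    simp [mB_neg_four_pow]
  · intro h
    have h_one : -(4 : ℝ) ^ 0 ∈ ({0} : Set ℝ) := h ▸ ⟨0, n.zero_le, rfl⟩
    norm_num at h_one
end
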